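/- Let A, B be square complex matrices whose spectra both lie in the closed left half-plane, and suppose ‖(sI − A)^{−1}‖ ≤ |s|^{−1} and ‖(sI − B)^{−1}‖ ≤ |s|^{−1} for all s on a contour Γ encircling both spectra. Then ‖exp(A) − exp(B)‖ ≤ C‖A − B‖ for a constant C depending only on the contour Γ. -/

import Mathlib

open scoped Matrix.Norms.L2Operator

/-!
The resolvent bound on the circle `‖s‖ = r` already forces `‖A‖ ≤ r`: the map
`z ↦ (1 - z • A)⁻¹` is holomorphic on the closed disc of radius `r⁻¹` (the spectrum lies inside the
circle), its derivative at `0` is `A`, and on the boundary it equals `s • (s • 1 - A)⁻¹` with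
`s = z⁻¹`, of norm at most `1`; Cauchy's estimate gives `‖A‖ ≤ 1 / r⁻¹`. On the ball of radius `r`
the exponential is `exp r`-Lipschitz, comparing the series termwise through
`‖Aⁿ - Bⁿ‖ ≤ n rⁿ⁻¹ ‖A - B‖`. So `C = exp r` works.
-/

open Metric Ring
open scoped ENNReal NNReal Nat

theorem Ring.inverse_smul {𝕜 A : Type*} [Field 𝕜] [Ring A] [Algebra 𝕜 A] {c : 𝕜} (hc : c ≠ 0)
    (x : A) : (c • x)⁻¹ʳ = c⁻¹ • x⁻¹ʳ := by
  by_cases hx : IsUnit x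
  · obtain ⟨u, rfl⟩ := hx
    simpa [Units.smul_def] using Ring.inverse_unit (Units.mk0 c hc • u)
  · have hcx : ¬IsUnit (c • x) := by rwa [← isUnit_smul_iff (Units.mk0 c hc) x] at hx
    rw [Ring.inverse_non_unit _ hx, Ring.inverse_non_unit _ hcx, smul_zero]

theorem norm_pow_succ_sub_pow_succ_le {𝔸 : Type*} [NormedRing 𝔸] {a b : 𝔸} {r : ℝ}
    (ha : ‖a‖ ≤ r) (hb : ‖b‖ ≤ r) (n : ℕ) :
    ‖a ^ (n + 1) - b ^ (n + 1)‖ ≤ (n + 1) * r ^ n * ‖a - b‖ := by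
  induction n with
  | zero => simp
  | succ n ih =>
    have hr : 0 ≤ r := (norm_nonneg a).trans ha
    have hbn : ‖b ^ (n + 1)‖ ≤ r ^ (n + 1) :=
      (norm_pow_le' b n.succ_pos).trans (pow_le_pow_left₀ (norm_nonneg b) hb _)
    calc ‖a ^ (n + 2) - b ^ (n + 2)‖
        = ‖a * (a ^ (n + 1) - b ^ (n + 1)) + (a - b) * b ^ (n + 1)‖ := by
          rw [pow_succ' a, pow_succ' b, mul_sub, sub_mul]; abel_nf
      _ ≤ ‖a‖ * ‖a ^ (n + 1) - b ^ (n + 1)‖ + ‖a - b‖ * ‖b ^ (n + 1)‖ :=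
          (norm_add_le _ _).trans (add_le_add (norm_mul_le _ _) (norm_mul_le _ _))
      _ ≤ r * ((n + 1) * r ^ n * ‖a - b‖) + ‖a - b‖ * r ^ (n + 1) := by gcongr
      _ = (↑(n + 1) + 1) * r ^ (n + 1) * ‖a - b‖ := by push_cast; ring

section BanachAlgebra

variable {𝔸 : Type*} [NormedRing 𝔸] [NormedAlgebra ℂ 𝔸] [CompleteSpace 𝔸]

theorem norm_exp_sub_exp_le {a b : 𝔸} {r : ℝ} (ha : ‖a‖ ≤ r) (hb : ‖b‖ ≤ r) :
    ‖NormedSpace.exp a - NormedSpace.exp b‖ ≤ Real.exp r * ‖a - b‖ := by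
  have hsum : HasSum (fun n => ((n + 1)! : ℂ)⁻¹ • (a ^ (n + 1) - b ^ (n + 1)))
      (NormedSpace.exp a - NormedSpace.exp b) := by
    have h := (NormedSpace.exp_series_hasSum_exp' (𝕂 := ℂ) a).sub
      (NormedSpace.exp_series_hasSum_exp' (𝕂 := ℂ) b)
    simpa [smul_sub] using (hasSum_nat_add_iff' 1).mpr h
  have hexp : HasSum (fun n : ℕ => r ^ n / n ! * ‖a - b‖) (Real.exp r * ‖a - b‖) := by
    rw [Real.exp_eq_exp_ℝ]
    exact (NormedSpace.expSeries_div_hasSum_exp r).mul_right _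
  refine hsum.tsum_eq ▸ tsum_of_norm_bounded hexp fun n => ?_
  rw [norm_smul, norm_inv, Complex.norm_natCast, Nat.factorial_succ, Nat.cast_mul]
  calc ((n + 1 : ℕ) * n ! : ℝ)⁻¹ * ‖a ^ (n + 1) - b ^ (n + 1)‖
      ≤ ((n + 1 : ℕ) * n ! : ℝ)⁻¹ * ((n + 1) * r ^ n * ‖a - b‖) := by
        gcongr; exact norm_pow_succ_sub_pow_succ_le ha hb n
    _ = r ^ n / n ! * ‖a - b‖ := by field_simp; push_cast; ring

theorem hasDerivAt_inverse_one_sub_smul (a : 𝔸) :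
    HasDerivAt (fun z : ℂ => (1 - z • a)⁻¹ʳ) a 0 := by
  have hlin : HasDerivAt (fun z : ℂ => 1 - z • a) (-a) 0 := by
    simpa using ((hasDerivAt_id (0 : ℂ)).smul_const a).const_sub 1
  have h := (hasFDerivAt_ringInverse (𝕜 := ℂ) (1 : 𝔸ˣ)).comp_hasDerivAt_of_eq 0 hlin (by simp)
  simp only [Units.val_one, inv_one, neg_apply,
    ContinuousLinearMap.mulLeftRight_apply, one_mul, mul_one, neg_neg] at h
  exact h

theorem norm_le_of_norm_resolvent_le {a : 𝔸} {r : ℝ} (hr : 0 < r)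
    (hspec : ∀ μ ∈ spectrum ℂ a, ‖μ‖ < r)
    (hres : ∀ s : ℂ, ‖s‖ = r → ‖(s • (1 : 𝔸) - a)⁻¹ʳ‖ ≤ ‖s‖⁻¹) :
    ‖a‖ ≤ r := by
  cases subsingleton_or_nontrivial 𝔸
  · simpa [Subsingleton.elim a 0] using hr.le
  set ρ : ℝ≥0 := ⟨r⁻¹, by positivity⟩
  have hρ : (ρ : ℝ≥0∞) < (spectralRadius ℂ a)⁻¹ := by
    have hlt := spectrum.spectralRadius_lt_of_forall_lt a (r := r.toNNReal) fun μ hμ => by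
      simpa [← NNReal.coe_lt_coe, hr.le] using hspec μ hμ
    have hρ_eq : (ρ : ℝ≥0∞) = (r.toNNReal : ℝ≥0∞)⁻¹ := by
      rw [← ENNReal.coe_inv (by simpa using hr)]
      congr 1; ext; simp [ρ, hr.le]; rfl
    exact hρ_eq ▸ ENNReal.inv_lt_inv.mpr hlt
  have hdiff : DiffContOnCl ℂ (fun z : ℂ => (1 - z • a)⁻¹ʳ) (ball 0 r⁻¹) := by
    apply DifferentiableOn.diffContOnCl
    rw [closure_ball _ (by positivity)]
    exact spectrum.differentiableOn_inverse_one_sub_smul hρ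
  have hsphere : ∀ z ∈ sphere (0 : ℂ) r⁻¹, ‖(1 - z • a)⁻¹ʳ‖ ≤ 1 := by
    intro z hz
    have hz_inv : ‖z⁻¹‖ = r := by simp_all [norm_inv]
    have hz0 : z ≠ 0 := by rintro rfl; simp [hr.ne] at hz_inv
    have hfactor : 1 - z • a = z • (z⁻¹ • (1 : 𝔸) - a) := by rw [smul_sub, smul_inv_smul₀ hz0]
    rw [hfactor, Ring.inverse_smul hz0, norm_smul, hz_inv]
    calc r * ‖(z⁻¹ • (1 : 𝔸) - a)⁻¹ʳ‖ ≤ r * r⁻¹ := by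
          gcongr; simpa [hz_inv] using hres _ hz_inv
      _ = 1 := mul_inv_cancel₀ hr.ne'
  simpa [(hasDerivAt_inverse_one_sub_smul a).deriv] using
    Complex.norm_deriv_le_of_forall_mem_sphere_norm_le (by positivity) hdiff hsphere

end BanachAlgebra

/-- If the spectra of `A` and `B` lie in the closed left half-plane inside a
contour (here a circle of radius `r` centered at the origin) and the resolvents satisfy
`‖(sI - A)⁻¹‖ ≤ |s|⁻¹` and `‖(sI - B)⁻¹‖ ≤ |s|⁻¹` on the contour, then
`‖exp A - exp B‖ ≤ C ‖A - B‖` with `C` depending only on the contour. -/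
theorem exp_diff_bound (M : ℕ) (r : ℝ) (hr : 0 < r) :
    ∃ C : ℝ, 0 < C ∧ ∀ A B : Matrix (Fin M) (Fin M) ℂ,
      (∀ μ ∈ spectrum ℂ A, μ.re ≤ 0 ∧ ‖μ‖ < r) →
      (∀ μ ∈ spectrum ℂ B, μ.re ≤ 0 ∧ ‖μ‖ < r) →
      (∀ s : ℂ, ‖s‖ = r →
        ‖(s • (1 : Matrix (Fin M) (Fin M) ℂ) - A)⁻¹‖ ≤ ‖s‖⁻¹ ∧
        ‖(s • (1 : Matrix (Fin M) (Fin M) ℂ) - B)⁻¹‖ ≤ ‖s‖⁻¹) →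
      ‖NormedSpace.exp A - NormedSpace.exp B‖ ≤ C * ‖A - B‖ := by
  refine ⟨Real.exp r, Real.exp_pos r, fun A B hA hB hres => ?_⟩
  have hnorm : ∀ X : Matrix (Fin M) (Fin M) ℂ, (∀ μ ∈ spectrum ℂ X, μ.re ≤ 0 ∧ ‖μ‖ < r) →
      (∀ s : ℂ, ‖s‖ = r → ‖(s • (1 : Matrix (Fin M) (Fin M) ℂ) - X)⁻¹‖ ≤ ‖s‖⁻¹) → ‖X‖ ≤ r :=
    fun X hspec hres => norm_le_of_norm_resolvent_le hr (fun μ hμ => (hspec μ hμ).2)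
      fun s hs => Matrix.nonsing_inv_eq_ringInverse (s • 1 - X) ▸ hres s hs
  exact norm_exp_sub_exp_le (hnorm A hA fun s hs => (hres s hs).1)
    (hnorm B hB fun s hs => (hres s hs).2)
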